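/- Let x_1,…,x_n be positive integers with x_1+⋯+x_n = 2N, let Q(x) be the partition constraint graph P(x) together with an additional edge g = {U,W} of weight N, and let C_1 be the configuration that orients g toward W, every edge {U,v_i} toward U, and every edge {W,v_i} toward v_i. Then C_1 is legal, and there exists a reconfiguration sequence starting at C_1 in which each edge is reversed at most once and in which the edge g is reversed at some step, if and only if there exists a subset S ⊆ {1,…,n} with ∑_{i∈S} x_i = N. -/

import Mathlib

/-!
STATEMENT 2: Let x_1,…,x_n be positive integers with x_1+⋯+x_n = 2N, let Q(x)
be the partition constraint graph P(x) together with an additional edge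
g = {U,W} of weight N, and let C_1 be the configuration that orients g toward
W, every edge {U,v_i} toward U, and every edge {W,v_i} toward v_i. Then C_1 is
legal, and there exists a reconfiguration sequence starting at C_1 in which
each edge is reversed at most once and in which the edge g is reversed at some
step, if and only if there exists a subset S ⊆ {1,…,n} with ∑_{i∈S} x_i = N.
-/

/-- A configuration of a constraint graph assigns to each edge one of its
two endpoints (its head). -/
def IsConf {V : Type} (G : SimpleGraph V) (C : Sym2 V → V) : Prop :=
  ∀ e ∈ G.edgeSet, C e ∈ e

/-- A configuration is legal if every vertex receives inflow (total weight of
edges whose head is that vertex) at least its minimum inflow. -/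
def Legal {V : Type} [Fintype V] [DecidableEq V] (G : SimpleGraph V)
    [DecidableRel G.Adj] (w : Sym2 V → ℕ) (μ : V → ℕ) (C : Sym2 V → V) : Prop :=
  ∀ v : V, μ v ≤ ∑ e ∈ G.edgeFinset, if C e = v then w e else 0

/-- Two configurations agree (as orientations of the edges of `G`). -/
def ConfEq {V : Type} (G : SimpleGraph V) (C C' : Sym2 V → V) : Prop :=
  ∀ e ∈ G.edgeSet, C e = C' e

/-- One reconfiguration step: exactly one edge changes its orientation. -/
def Step {V : Type} (G : SimpleGraph V) (C C' : Sym2 V → V) : Prop :=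
  ∃ e ∈ G.edgeSet, C e ≠ C' e ∧ ∀ f ∈ G.edgeSet, f ≠ e → C f = C' f

/-- A reconfiguration sequence: every configuration is a legal configuration
and each consecutive pair differs in the orientation of exactly one edge. -/
def IsReconfSeq {V : Type} [Fintype V] [DecidableEq V] (G : SimpleGraph V)
    [DecidableRel G.Adj] (w : Sym2 V → ℕ) (μ : V → ℕ) {m : ℕ}
    (Cs : Fin (m + 1) → Sym2 V → V) : Prop :=
  (∀ i, IsConf G (Cs i) ∧ Legal G w μ (Cs i)) ∧
    ∀ i : Fin m, Step G (Cs i.castSucc) (Cs i.succ)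

/-- In the sequence, each edge is reversed at most once. -/
def AtMostOnce {V : Type} (G : SimpleGraph V) {m : ℕ}
    (Cs : Fin (m + 1) → Sym2 V → V) : Prop :=
  ∀ e ∈ G.edgeSet, ∀ i j : Fin m,
    Cs i.castSucc e ≠ Cs i.succ e → Cs j.castSucc e ≠ Cs j.succ e → i = j

/-- Vertices of the partition constraint graph: `U`, `W` and `v i` for `i < n`. -/
inductive PVert (n : ℕ) : Type
  | U : PVert n
  | W : PVert n
  | v : Fin n → PVert n
deriving DecidableEq, Fintype

/-- Adjacency of `Q(x)`: `U` and `W` are each joined to every `v i`, and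
additionally `U` is joined to `W`. -/
def qadjB {n : ℕ} : PVert n → PVert n → Bool
  | .U, .v _ => true
  | .v _, .U => true
  | .W, .v _ => true
  | .v _, .W => true
  | .U, .W => true
  | .W, .U => true
  | _, _ => false

/-- The underlying graph of the constraint graph `Q(x)`. -/
def QGraph (n : ℕ) : SimpleGraph (PVert n) where
  Adj a b := qadjB a b
  symm := ⟨by intro a b h; cases a <;> cases b <;> simp_all [qadjB]⟩
  loopless := ⟨by intro a; cases a <;> simp [qadjB]⟩

instance (n : ℕ) : DecidableRel (QGraph n).Adj :=
  fun a b => inferInstanceAs (Decidable (qadjB a b = true))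

/-- Edge weights of `Q(x)` as a symmetric pair function: the edges `{U, v i}`
and `{W, v i}` both have weight `x i`, and the edge `g = {U,W}` has weight `N`. -/
def wPairQ {n : ℕ} (x : Fin n → ℕ) (N : ℕ) : PVert n → PVert n → ℕ
  | .U, .v i => x i
  | .v i, .U => x i
  | .W, .v i => x i
  | .v i, .W => x i
  | .U, .W => N
  | .W, .U => N
  | _, _ => 0

/-- Edge weights of `Q(x)`. -/
def wQ {n : ℕ} (x : Fin n → ℕ) (N : ℕ) : Sym2 (PVert n) → ℕ :=
  Sym2.lift ⟨wPairQ x N, by intro a b; cases a <;> cases b <;> rfl⟩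

/-- Minimum inflows: `μ(U) = μ(W) = N` and `μ(v i) = x i`. -/
def μQ {n : ℕ} (x : Fin n → ℕ) (N : ℕ) : PVert n → ℕ
  | .U => N
  | .W => N
  | .v i => x i

/-- The head function of the initial configuration `C₁`: `g = {U,W}` is
oriented toward `W`, each `{U, v i}` toward `U`, each `{W, v i}` toward `v i`. -/
def initHead {n : ℕ} : PVert n → PVert n → PVert n
  | .U, .v _ => .U
  | .v _, .U => .U
  | .W, .v i => .v i
  | .v i, .W => .v i
  | .U, .W => .W
  | .W, .U => .W
  | _, _ => .U

/-- The initial configuration `C₁`. -/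
def C1 {n : ℕ} : Sym2 (PVert n) → PVert n :=
  Sym2.lift ⟨initHead, by intro a b; cases a <;> cases b <;> rfl⟩

/-- The additional edge `g = {U, W}`. -/
def gEdge (n : ℕ) : Sym2 (PVert n) := s(PVert.U, PVert.W)

/-!
If a legal reconfiguration reverses `g`, look at the two legal configurations on either side of
that step; they agree off `g`. On the side where `g` points away from `U`, the edges `{U, v i}`
pointing to `U` carry weight at least `N`; on the side where `g` points away from `W`, the edges
`{W, v i}` pointing to `W` carry weight at least `N`. Each `v i` needs one of its two edges, so
these index sets are disjoint, and as the total weight is `2N` each of them weighs exactly `N`.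

Conversely, given `S` of weight `N`, reverse for each `i ∈ S` first `{U, v i}` and then
`{W, v i}`, and finally `g`: `U` always keeps the edges `{U, v i}` with `i ∉ S`, of weight `N`,
and just before `g` is reversed `W` receives `2N`.
-/

open Finset

section Reconfiguration

variable {V : Type}

def inflow [Fintype V] [DecidableEq V] (G : SimpleGraph V) [DecidableRel G.Adj]
    (w : Sym2 V → ℕ) (C : Sym2 V → V) (v : V) : ℕ :=
  ∑ e ∈ G.edgeFinset, if C e = v then w e else 0

lemma Step.eq_of_ne {G : SimpleGraph V} {C C' : Sym2 V → V} (h : Step G C C') {e f : Sym2 V}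
    (he : e ∈ G.edgeSet) (hne : C e ≠ C' e) (hf : f ∈ G.edgeSet) (hfe : f ≠ e) :
    C f = C' f := by
  obtain ⟨e', -, -, hrest⟩ := h
  obtain rfl : e = e' := by_contra fun h => hne (hrest e he h)
  exact hrest f hf hfe

/-- The configuration at time `t` when each edge `e` is switched from its orientation in `C₀`
to its orientation in `C₁` at step `σ e`. -/
def scheduled (C₀ C₁ : Sym2 V → V) (σ : Sym2 V → ℕ) (t : ℕ) : Sym2 V → V :=
  fun e => if σ e < t then C₁ e else C₀ e

variable {G : SimpleGraph V} {C₀ C₁ : Sym2 V → V} {σ : Sym2 V → ℕ}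

lemma scheduled_ne_succ_iff {t : ℕ} {e : Sym2 V} :
    scheduled C₀ C₁ σ t e ≠ scheduled C₀ C₁ σ (t + 1) e ↔ σ e = t ∧ C₀ e ≠ C₁ e := by
  unfold scheduled
  by_cases h : σ e < t
  · simp [h, Nat.lt_succ_of_lt h, h.ne]
  · by_cases h' : σ e = t
    · simp [h']
    · simp [h, h', show ¬σ e < t + 1 by omega]

lemma isConf_scheduled (h₀ : IsConf G C₀) (h₁ : IsConf G C₁) (t : ℕ) :
    IsConf G (scheduled C₀ C₁ σ t) := fun e he => by
  unfold scheduled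
  split_ifs
  exacts [h₁ e he, h₀ e he]

lemma step_scheduled {t : ℕ}
    (hinj : Set.InjOn σ {e | e ∈ G.edgeSet ∧ C₀ e ≠ C₁ e})
    (hsurj : ∃ e ∈ G.edgeSet, σ e = t ∧ C₀ e ≠ C₁ e) :
    Step G (scheduled C₀ C₁ σ t) (scheduled C₀ C₁ σ (t + 1)) := by
  obtain ⟨e, he, hσe, hne⟩ := hsurj
  refine ⟨e, he, scheduled_ne_succ_iff.2 ⟨hσe, hne⟩, fun f hf hfe => ?_⟩
  by_contra hff
  obtain ⟨hσf, hnef⟩ := scheduled_ne_succ_iff.1 hff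
  exact hfe (hinj ⟨hf, hnef⟩ ⟨he, hne⟩ (hσf.trans hσe.symm))

lemma isReconfSeq_scheduled [Fintype V] [DecidableEq V] [DecidableRel G.Adj]
    {w : Sym2 V → ℕ} {μ : V → ℕ} {m : ℕ}
    (hlegal : ∀ t ≤ m, IsConf G (scheduled C₀ C₁ σ t) ∧ Legal G w μ (scheduled C₀ C₁ σ t))
    (hinj : Set.InjOn σ {e | e ∈ G.edgeSet ∧ C₀ e ≠ C₁ e})
    (hsurj : ∀ t < m, ∃ e ∈ G.edgeSet, σ e = t ∧ C₀ e ≠ C₁ e) :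
    IsReconfSeq G w μ (fun t : Fin (m + 1) => scheduled C₀ C₁ σ t) :=
  ⟨fun t => hlegal t (Nat.lt_succ_iff.1 t.2), fun t => step_scheduled hinj (hsurj t t.2)⟩

lemma atMostOnce_scheduled (G : SimpleGraph V) (m : ℕ) :
    AtMostOnce G (fun t : Fin (m + 1) => scheduled C₀ C₁ σ t) := fun _ _ _ _ hi hj =>
  Fin.ext ((scheduled_ne_succ_iff.1 hi).1.symm.trans (scheduled_ne_succ_iff.1 hj).1)

end Reconfiguration

namespace QGraph

variable {n : ℕ}

def edgeU : Fin n ↪ Sym2 (PVert n) := ⟨fun i => s(.U, .v i), fun i j h => by simpa using h⟩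

def edgeW : Fin n ↪ Sym2 (PVert n) := ⟨fun i => s(.W, .v i), fun i j h => by simpa using h⟩

lemma edgeU_apply (i : Fin n) : edgeU i = s(.U, .v i) := rfl

lemma edgeW_apply (i : Fin n) : edgeW i = s(.W, .v i) := rfl

lemma mem_edgeSet {e : Sym2 (PVert n)} :
    e ∈ (QGraph n).edgeSet ↔ e = gEdge n ∨ (∃ i, e = edgeU i) ∨ ∃ i, e = edgeW i := by
  induction e using Sym2.ind with
  | _ a b =>
    cases a <;> cases b <;>
      simp [SimpleGraph.mem_edgeSet, QGraph, qadjB, gEdge, edgeU_apply, edgeW_apply]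

lemma gEdge_mem : gEdge n ∈ (QGraph n).edgeSet := mem_edgeSet.2 (.inl rfl)

lemma edgeU_mem (i : Fin n) : edgeU i ∈ (QGraph n).edgeSet :=
  mem_edgeSet.2 (.inr (.inl ⟨i, rfl⟩))

lemma edgeW_mem (i : Fin n) : edgeW i ∈ (QGraph n).edgeSet :=
  mem_edgeSet.2 (.inr (.inr ⟨i, rfl⟩))

lemma edgeW_ne_gEdge (i : Fin n) : edgeW i ≠ gEdge n := by simp [edgeW_apply, gEdge]

lemma edgeFinset_eq :
    (QGraph n).edgeFinset = insert (gEdge n) (univ.map edgeU ∪ univ.map edgeW) := by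
  ext e
  simp only [SimpleGraph.mem_edgeFinset, mem_edgeSet, mem_insert, mem_union, mem_map, mem_univ,
    true_and, eq_comm (b := e)]

lemma sum_edgeFinset {M : Type} [AddCommMonoid M] (f : Sym2 (PVert n) → M) :
    ∑ e ∈ (QGraph n).edgeFinset, f e =
      f (gEdge n) + ∑ i, f (edgeU i) + ∑ i, f (edgeW i) := by
  rw [edgeFinset_eq, sum_insert, sum_union, sum_map, sum_map, add_assoc]
  · simp [disjoint_left, edgeU_apply, edgeW_apply]
  · simp [gEdge, edgeU_apply, edgeW_apply]

variable {x : Fin n → ℕ} {N : ℕ} {C : Sym2 (PVert n) → PVert n}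

lemma inflow_eq (u : PVert n) :
    inflow (QGraph n) (wQ x N) C u = (if C (gEdge n) = u then N else 0) +
      (∑ i, if C (edgeU i) = u then x i else 0) + ∑ i, if C (edgeW i) = u then x i else 0 :=
  sum_edgeFinset _

lemma head_gEdge (hC : IsConf (QGraph n) C) : C (gEdge n) = .U ∨ C (gEdge n) = .W :=
  Sym2.mem_iff.1 (hC _ gEdge_mem)

lemma head_edgeU (hC : IsConf (QGraph n) C) (i : Fin n) :
    C (edgeU i) = .U ∨ C (edgeU i) = .v i :=
  Sym2.mem_iff.1 (hC _ (edgeU_mem i))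

lemma head_edgeW (hC : IsConf (QGraph n) C) (i : Fin n) :
    C (edgeW i) = .W ∨ C (edgeW i) = .v i :=
  Sym2.mem_iff.1 (hC _ (edgeW_mem i))

lemma inflow_U (hC : IsConf (QGraph n) C) :
    inflow (QGraph n) (wQ x N) C .U =
      (if C (gEdge n) = .U then N else 0) + ∑ i, if C (edgeU i) = .U then x i else 0 := by
  have hW : ∑ i, (if C (edgeW i) = .U then x i else 0) = 0 :=
    sum_eq_zero fun i _ => by rcases head_edgeW hC i with h | h <;> simp [h]
  rw [inflow_eq, hW, add_zero]

lemma inflow_W (hC : IsConf (QGraph n) C) :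
    inflow (QGraph n) (wQ x N) C .W =
      (if C (gEdge n) = .W then N else 0) + ∑ i, if C (edgeW i) = .W then x i else 0 := by
  have hU : ∑ i, (if C (edgeU i) = .W then x i else 0) = 0 :=
    sum_eq_zero fun i _ => by rcases head_edgeU hC i with h | h <;> simp [h]
  rw [inflow_eq, hU, add_zero]

lemma inflow_v (hC : IsConf (QGraph n) C) (i : Fin n) :
    inflow (QGraph n) (wQ x N) C (.v i) =
      (if C (edgeU i) = .v i then x i else 0) + if C (edgeW i) = .v i then x i else 0 := by
  rw [inflow_eq, if_neg (by rcases head_gEdge hC with h | h <;> simp [h]), zero_add,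
    Fintype.sum_eq_single i fun j hj => ?_, Fintype.sum_eq_single i fun j hj => ?_]
  · rcases head_edgeW hC j with h | h <;> simp [h, hj]
  · rcases head_edgeU hC j with h | h <;> simp [h, hj]

lemma legal_iff (hC : IsConf (QGraph n) C) :
    Legal (QGraph n) (wQ x N) (μQ x N) C ↔
      (N ≤ (if C (gEdge n) = .U then N else 0) + ∑ i, if C (edgeU i) = .U then x i else 0) ∧
      (N ≤ (if C (gEdge n) = .W then N else 0) + ∑ i, if C (edgeW i) = .W then x i else 0) ∧
      ∀ i, x i ≤
        (if C (edgeU i) = .v i then x i else 0) + if C (edgeW i) = .v i then x i else 0 := by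
  rw [← inflow_U hC, ← inflow_W hC]
  simp only [← inflow_v (x := x) (N := N) hC]
  refine ⟨fun h => ⟨h .U, h .W, fun i => h (.v i)⟩, fun ⟨hU, hW, hv⟩ u => ?_⟩
  cases u
  exacts [hU, hW, hv _]

@[simp] lemma C1_gEdge : C1 (gEdge n) = .W := rfl

@[simp] lemma C1_edgeU (i : Fin n) : C1 (edgeU i) = .U := rfl

@[simp] lemma C1_edgeW (i : Fin n) : C1 (edgeW i) = .v i := rfl

lemma isConf_C1 : IsConf (QGraph n) (C1 (n := n)) := by
  intro e he
  rcases mem_edgeSet.1 he with rfl | ⟨i, rfl⟩ | ⟨i, rfl⟩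
  exacts [Sym2.mem_mk_right _ _, Sym2.mem_mk_left _ _, Sym2.mem_mk_right _ _]

lemma legal_C1 (hsum : ∑ i, x i = 2 * N) : Legal (QGraph n) (wQ x N) (μQ x N) (C1 (n := n)) := by
  refine (legal_iff isConf_C1).2 ⟨?_, by simp, by simp⟩
  simp only [C1_gEdge, C1_edgeU, reduceCtorEq, ↓reduceIte, zero_add, hsum]
  omega

lemma exists_sum_eq_of_legal_flip (hpos : ∀ i, 0 < x i) (hsum : ∑ i, x i = 2 * N)
    {C' : Sym2 (PVert n) → PVert n} (hC : IsConf (QGraph n) C) (hC' : IsConf (QGraph n) C')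
    (hlC : Legal (QGraph n) (wQ x N) (μQ x N) C) (hlC' : Legal (QGraph n) (wQ x N) (μQ x N) C')
    (hg : C (gEdge n) = .W) (hg' : C' (gEdge n) = .U) (hW : ∀ i, C (edgeW i) = C' (edgeW i)) :
    ∃ S : Finset (Fin n), ∑ i ∈ S, x i = N := by
  obtain ⟨hU, -, hv⟩ := (legal_iff hC).1 hlC
  obtain ⟨-, hW', -⟩ := (legal_iff hC').1 hlC'
  simp only [hg, hg', ← hW, reduceCtorEq, if_false, zero_add] at hU hW'
  have hdisj (i : Fin n) :
      (if C (edgeU i) = .U then x i else 0) + (if C (edgeW i) = .W then x i else 0) ≤ x i := by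
    have := hv i
    rcases head_edgeU hC i with h | h <;> rcases head_edgeW hC i with h' | h' <;>
      simp_all [(hpos i).ne']
  have := hsum ▸ sum_add_distrib.symm.trans_le (sum_le_sum fun i _ => hdisj i)
  exact ⟨univ.filter fun i => C (edgeW i) = .W, by rw [sum_filter]; omega⟩

lemma exists_sum_eq_of_step (hpos : ∀ i, 0 < x i) (hsum : ∑ i, x i = 2 * N)
    {C' : Sym2 (PVert n) → PVert n}
    (hC : IsConf (QGraph n) C ∧ Legal (QGraph n) (wQ x N) (μQ x N) C)
    (hC' : IsConf (QGraph n) C' ∧ Legal (QGraph n) (wQ x N) (μQ x N) C')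
    (hstep : Step (QGraph n) C C') (hflip : C (gEdge n) ≠ C' (gEdge n)) :
    ∃ S : Finset (Fin n), ∑ i ∈ S, x i = N := by
  have hW (i : Fin n) : C (edgeW i) = C' (edgeW i) :=
    hstep.eq_of_ne gEdge_mem hflip (edgeW_mem i) (edgeW_ne_gEdge i)
  rcases head_gEdge hC.1 with hg | hg
  · have hg' : C' (gEdge n) = .W := (head_gEdge hC'.1).resolve_left (hg ▸ hflip.symm)
    exact exists_sum_eq_of_legal_flip hpos hsum hC'.1 hC.1 hC'.2 hC.2 hg' hg fun i => (hW i).symm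
  · have hg' : C' (gEdge n) = .U := (head_gEdge hC'.1).resolve_right (hg ▸ hflip.symm)
    exact exists_sum_eq_of_legal_flip hpos hsum hC.1 hC'.1 hC.2 hC'.2 hg hg' hW

section Schedule

variable (S : Finset (Fin n))

noncomputable def rank (i : Fin n) : ℕ := if h : i ∈ S then S.equivFin ⟨i, h⟩ else 0

lemma rank_lt {i : Fin n} (hi : i ∈ S) : rank S i < S.card := by
  simp [rank, hi]

lemma rank_injOn : Set.InjOn (rank S) S := fun i hi j hj h => by
  rw [mem_coe] at hi hj
  simpa [rank, hi, hj, Fin.val_inj] using h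

lemma exists_rank_eq {t : ℕ} (ht : t < S.card) : ∃ i ∈ S, rank S i = t :=
  ⟨S.equivFin.symm ⟨t, ht⟩, (S.equivFin.symm _).2, by simp [rank]⟩

def finalHead : PVert n → PVert n → PVert n
  | .U, .v i | .v i, .U => if i ∈ S then .v i else .U
  | .W, .v i | .v i, .W => if i ∈ S then .W else .v i
  | _, _ => .U

def finalConf : Sym2 (PVert n) → PVert n :=
  Sym2.lift ⟨finalHead S, by intro a b; cases a <;> cases b <;> rfl⟩

noncomputable def schedulePair : PVert n → PVert n → ℕ
  | .U, .v i | .v i, .U => 2 * rank S i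
  | .W, .v i | .v i, .W => 2 * rank S i + 1
  | _, _ => 2 * S.card

noncomputable def schedule : Sym2 (PVert n) → ℕ :=
  Sym2.lift ⟨schedulePair S, by intro a b; cases a <;> cases b <;> rfl⟩

@[simp] lemma finalConf_gEdge : finalConf S (gEdge n) = .U := rfl

@[simp] lemma finalConf_edgeU (i : Fin n) :
    finalConf S (edgeU i) = if i ∈ S then .v i else .U := rfl

@[simp] lemma finalConf_edgeW (i : Fin n) :
    finalConf S (edgeW i) = if i ∈ S then .W else .v i := rfl

@[simp] lemma schedule_gEdge : schedule S (gEdge n) = 2 * S.card := rfl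

@[simp] lemma schedule_edgeU (i : Fin n) : schedule S (edgeU i) = 2 * rank S i := rfl

@[simp] lemma schedule_edgeW (i : Fin n) : schedule S (edgeW i) = 2 * rank S i + 1 := rfl

lemma isConf_finalConf : IsConf (QGraph n) (finalConf S) := by
  intro e he
  rcases mem_edgeSet.1 he with rfl | ⟨i, rfl⟩ | ⟨i, rfl⟩
  · exact Sym2.mem_mk_left _ _
  · rw [finalConf_edgeU, edgeU_apply]
    split_ifs <;> simp
  · rw [finalConf_edgeW, edgeW_apply]
    split_ifs <;> simp

lemma schedule_injOn :
    Set.InjOn (schedule S) {e | e ∈ (QGraph n).edgeSet ∧ C1 e ≠ finalConf S e} := by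
  rintro e ⟨he, hne⟩ f ⟨hf, hne'⟩ hσ
  rcases mem_edgeSet.1 he with rfl | ⟨i, rfl⟩ | ⟨i, rfl⟩ <;>
    rcases mem_edgeSet.1 hf with rfl | ⟨j, rfl⟩ | ⟨j, rfl⟩ <;>
    simp only [C1_gEdge, C1_edgeU, C1_edgeW, finalConf_gEdge, finalConf_edgeU, finalConf_edgeW,
      schedule_gEdge, schedule_edgeU, schedule_edgeW, ne_eq, reduceCtorEq, not_false_eq_true,
      right_eq_ite_iff, imp_false, Decidable.not_not, mul_eq_mul_left_iff, OfNat.ofNat_ne_zero,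
      or_false, Nat.add_right_cancel_iff] at hne hne' hσ
  all_goals first
    | rfl
    | omega
    | exact congrArg _ (rank_injOn S hne hne' hσ)
    | (have := rank_lt S hne; omega)
    | (have := rank_lt S hne'; omega)

lemma exists_schedule_eq {t : ℕ} (ht : t < 2 * S.card + 1) :
    ∃ e ∈ (QGraph n).edgeSet, schedule S e = t ∧ C1 e ≠ finalConf S e := by
  rcases (show t = 2 * S.card ∨ t < 2 * S.card by omega) with rfl | ht
  · exact ⟨gEdge n, gEdge_mem, rfl, by simp⟩
  obtain ⟨i, hi, hrank⟩ := exists_rank_eq S (show t / 2 < S.card by omega)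
  rcases Nat.even_or_odd' t with ⟨r, rfl | rfl⟩
  · exact ⟨edgeU i, edgeU_mem i, by simp; omega, by simp [hi]⟩
  · exact ⟨edgeW i, edgeW_mem i, by simp; omega, by simp [hi]⟩

variable {S} (t : ℕ)

lemma scheduled_gEdge : scheduled C1 (finalConf S) (schedule S) t (gEdge n) =
    if 2 * S.card < t then .U else .W := rfl

lemma scheduled_edgeU (i : Fin n) : scheduled C1 (finalConf S) (schedule S) t (edgeU i) =
    if i ∈ S ∧ 2 * rank S i < t then .v i else .U := by
  simp only [scheduled, finalConf_edgeU, schedule_edgeU, C1_edgeU]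
  by_cases hi : i ∈ S <;> simp [hi]

lemma scheduled_edgeW (i : Fin n) : scheduled C1 (finalConf S) (schedule S) t (edgeW i) =
    if i ∈ S ∧ 2 * rank S i + 1 < t then .W else .v i := by
  simp only [scheduled, finalConf_edgeW, schedule_edgeW, C1_edgeW]
  by_cases hi : i ∈ S <;> simp [hi]

lemma legal_scheduled (hsum : ∑ i, x i = 2 * N) (hS : ∑ i ∈ S, x i = N)
    (ht : t ≤ 2 * S.card + 1) :
    Legal (QGraph n) (wQ x N) (μQ x N) (scheduled C1 (finalConf S) (schedule S) t) := by
  rw [legal_iff (isConf_scheduled isConf_C1 (isConf_finalConf S) t)]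
  simp only [scheduled_gEdge, scheduled_edgeU, scheduled_edgeW]
  refine ⟨?_, ?_, fun i => ?_⟩
  · have hcompl : ∑ i ∈ Sᶜ, x i = N := by
      have := sum_compl_add_sum S x
      omega
    calc N = ∑ i ∈ Sᶜ, x i := hcompl.symm
      _ ≤ ∑ i, if (if i ∈ S ∧ 2 * rank S i < t then .v i else .U) = PVert.U
            then x i else 0 := by
        rw [← sum_filter]
        exact sum_le_sum_of_subset fun i hi => by simp_all
      _ ≤ _ := le_add_self
  · by_cases h : 2 * S.card < t
    · calc N = ∑ i ∈ S, x i := hS.symm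
        _ ≤ ∑ i, if (if i ∈ S ∧ 2 * rank S i + 1 < t then .W else .v i) = PVert.W
              then x i else 0 := by
          rw [← sum_filter]
          refine sum_le_sum_of_subset fun i hi => ?_
          have := rank_lt S hi
          simp only [hi, true_and, mem_filter, mem_univ, ite_eq_left_iff, not_lt,
            reduceCtorEq, imp_false, not_le]
          omega
        _ ≤ _ := le_add_self
    · simp [h]
  · by_cases h : i ∈ S ∧ 2 * rank S i < t
    · simp [h]
    · simp [h, show ¬(i ∈ S ∧ 2 * rank S i + 1 < t) from fun h' => h ⟨h'.1, by omega⟩]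

end Schedule

lemma exists_reconfSeq_of_sum_eq {S : Finset (Fin n)} (hsum : ∑ i, x i = 2 * N)
    (hS : ∑ i ∈ S, x i = N) :
    ∃ (m : ℕ) (Cs : Fin (m + 1) → Sym2 (PVert n) → PVert n),
      ConfEq (QGraph n) (Cs 0) (C1 (n := n)) ∧
      IsReconfSeq (QGraph n) (wQ x N) (μQ x N) Cs ∧
      AtMostOnce (QGraph n) Cs ∧
      ∃ i : Fin m, Cs i.castSucc (gEdge n) ≠ Cs i.succ (gEdge n) := by
  refine ⟨2 * S.card + 1, fun t => scheduled C1 (finalConf S) (schedule S) t,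
    fun e _ => by simp [scheduled], ?_, atMostOnce_scheduled _ _, Fin.last _,
    scheduled_ne_succ_iff.2 ⟨rfl, by simp⟩⟩
  exact isReconfSeq_scheduled
    (fun t ht =>
      ⟨isConf_scheduled isConf_C1 (isConf_finalConf S) t, legal_scheduled t hsum hS ht⟩)
    (schedule_injOn S) (fun t ht => exists_schedule_eq S ht)

end QGraph

theorem stmt2 (n N : ℕ) (x : Fin n → ℕ) (hpos : ∀ i, 0 < x i)
    (hsum : ∑ i, x i = 2 * N) :
    IsConf (QGraph n) (C1 (n := n)) ∧
    Legal (QGraph n) (wQ x N) (μQ x N) (C1 (n := n)) ∧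
    ((∃ (m : ℕ) (Cs : Fin (m + 1) → Sym2 (PVert n) → PVert n),
        ConfEq (QGraph n) (Cs 0) (C1 (n := n)) ∧
        IsReconfSeq (QGraph n) (wQ x N) (μQ x N) Cs ∧
        AtMostOnce (QGraph n) Cs ∧
        ∃ i : Fin m, Cs i.castSucc (gEdge n) ≠ Cs i.succ (gEdge n)) ↔
      ∃ S : Finset (Fin n), ∑ i ∈ S, x i = N) := by
  refine ⟨QGraph.isConf_C1, QGraph.legal_C1 hsum,
    ⟨?_, fun ⟨S, hS⟩ => QGraph.exists_reconfSeq_of_sum_eq hsum hS⟩⟩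
  rintro ⟨m, Cs, -, ⟨hlegal, hstep⟩, -, i, hflip⟩
  exact QGraph.exists_sum_eq_of_step hpos hsum (hlegal _) (hlegal _) (hstep i) hflip
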